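/- arXiv:2101.11522 — 9 statements merged into one kernel-verified Lean document; each statement's English description precedes it below -/
import Mathlib

section
/- Let L be a Lie algebra and α: L → L a Lie algebra endomorphism. Then L equipped with the bracket [x,y]_α = [α(x), α(y)] and the twist α is a multiplicative Hom-Lie algebra. -/
/-- If `L` is a Lie algebra and `α : L → L` a Lie algebra endomorphism, then `L`
equipped with the bracket `⁅x, y⁆_α = ⁅α x, α y⁆` and the twist `α` is a multiplicative
Hom-Lie algebra: the new bracket is bilinear (automatic), skew-symmetric, satisfies the
Hom-Jacobi identity, and `α` preserves the new bracket. -/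
theorem stmt0 (K L : Type*) [Field K] [LieRing L] [LieAlgebra K L]
    (α : L →ₗ[K] L) (hα : ∀ x y : L, α ⁅x, y⁆ = ⁅α x, α y⁆) :
    -- skew-symmetry of the new bracket
    (∀ x y : L, ⁅α x, α y⁆ = -⁅α y, α x⁆) ∧
    -- Hom-Jacobi identity for the new bracket with twist `α`
    (∀ x y z : L,
      ⁅α (α x), α ⁅α y, α z⁆⁆ + ⁅α (α z), α ⁅α x, α y⁆⁆ + ⁅α (α y), α ⁅α z, α x⁆⁆ = 0) ∧
    -- multiplicativity: `α` preserves the new bracket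
    (∀ x y : L, α ⁅α x, α y⁆ = ⁅α (α x), α (α y)⁆) := by
  refine ⟨fun x y => (lie_skew _ _).symm, fun x y z => ?_, fun x y => hα _ _⟩
  simp only [hα]
  have h := lie_jacobi (α (α x)) (α (α y)) (α (α z))
  abel_nf at h ⊢
  exact h
end

section
/- Any Hom-associative algebra (A, α) becomes a Hom-Lie algebra with the commutator bracket [a,b] = ab − ba. -/
/-- Any Hom-associative algebra `(A, α)` (bilinear multiplication `mul`, linear map
`α` preserving the multiplication, satisfying the Hom-associativity condition
`α(a)(bc) = (ab)α(c)`) becomes a Hom-Lie algebra with the commutator bracket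
`⁅a, b⁆ = a*b - b*a`: the bracket is skew-symmetric, satisfies the Hom-Jacobi identity, and
is preserved by `α`. -/
theorem stmt1 (K A : Type*) [Field K] [AddCommGroup A] [Module K A]
    (mul : A →ₗ[K] A →ₗ[K] A) (α : A →ₗ[K] A)
    (hmul : ∀ a b : A, α (mul a b) = mul (α a) (α b))
    (hassoc : ∀ a b c : A, mul (α a) (mul b c) = mul (mul a b) (α c)) :
    -- skew-symmetry
    (∀ a b : A, mul a b - mul b a = -(mul b a - mul a b)) ∧
    (∀ a : A, mul a a - mul a a = 0) ∧
    -- Hom-Jacobi identity for the commutator bracket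
    (∀ x y z : A,
      (mul (α x) (mul y z - mul z y) - mul (mul y z - mul z y) (α x)) +
      (mul (α z) (mul x y - mul y x) - mul (mul x y - mul y x) (α z)) +
      (mul (α y) (mul z x - mul x z) - mul (mul z x - mul x z) (α y)) = 0) ∧
    -- multiplicativity of `α` for the commutator bracket
    (∀ a b : A, α (mul a b - mul b a) = mul (α a) (α b) - mul (α b) (α a)) := by
  refine ⟨fun a b => by abel, fun a => by abel, fun x y z => ?_, fun a b => by
    simp [map_sub, hmul]⟩
  simp only [map_sub, LinearMap.sub_apply, hassoc]
  abel
end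

section
/- Given a split extension of Hom-Lie algebras 0 → (M, α_M) →ⁱ (K, α_K) →^π (L, α_L) → 0 with section σ (π∘σ = id), the assignment ˣm := i⁻¹[σ(x), i(m)] defines a Hom-action of (L, α_L) on (M, α_M). -/
/-- Given a split extension of multiplicative Hom-Lie algebras
`0 → (M, αM) →ⁱ (K', αK) →π (L, αL) → 0` with section `σ` (`π ∘ σ = id`), the assignment
`ˣm := i⁻¹ ⁅σ x, i m⁆` is well defined (i.e. `⁅σ x, i m⁆` lies in the image of `i`) and
defines a Hom-action of `(L, αL)` on `(M, αM)`. -/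
theorem stmt9 (𝕂 M G L : Type*) [Field 𝕂]
    [AddCommGroup M] [Module 𝕂 M] [AddCommGroup G] [Module 𝕂 G]
    [AddCommGroup L] [Module 𝕂 L]
    (brM : M →ₗ[𝕂] M →ₗ[𝕂] M) (αM : M →ₗ[𝕂] M)
    (brG : G →ₗ[𝕂] G →ₗ[𝕂] G) (αG : G →ₗ[𝕂] G)
    (brL : L →ₗ[𝕂] L →ₗ[𝕂] L) (αL : L →ₗ[𝕂] L)
    (skewG : ∀ x y : G, brG x y = -brG y x) (altG : ∀ x : G, brG x x = 0)
    (jacG : ∀ x y z : G, brG (αG x) (brG y z) + brG (αG z) (brG x y) + brG (αG y) (brG z x) = 0)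
    (multG : ∀ x y : G, αG (brG x y) = brG (αG x) (αG y))
    (skewM : ∀ x y : M, brM x y = -brM y x) (altM : ∀ x : M, brM x x = 0)
    (jacM : ∀ x y z : M, brM (αM x) (brM y z) + brM (αM z) (brM x y) + brM (αM y) (brM z x) = 0)
    (multM : ∀ x y : M, αM (brM x y) = brM (αM x) (αM y))
    (skewL : ∀ x y : L, brL x y = -brL y x) (altL : ∀ x : L, brL x x = 0)
    (jacL : ∀ x y z : L, brL (αL x) (brL y z) + brL (αL z) (brL x y) + brL (αL y) (brL z x) = 0)
    (multL : ∀ x y : L, αL (brL x y) = brL (αL x) (αL y))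
    -- the morphisms of the split extension, all homomorphisms of Hom-Lie algebras
    (i : M →ₗ[𝕂] G) (π : G →ₗ[𝕂] L) (σ : L →ₗ[𝕂] G)
    (hibr : ∀ m m' : M, i (brM m m') = brG (i m) (i m')) (hiα : ∀ m : M, i (αM m) = αG (i m))
    (hπbr : ∀ g g' : G, π (brG g g') = brL (π g) (π g')) (hπα : ∀ g : G, π (αG g) = αL (π g))
    (hσbr : ∀ x y : L, σ (brL x y) = brG (σ x) (σ y)) (hσα : ∀ x : L, σ (αL x) = αG (σ x))
    (hinj : Function.Injective i) (hsurj : Function.Surjective π)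
    (hexact : LinearMap.ker π = LinearMap.range i)
    (hsplit : ∀ x : L, π (σ x) = x) :
    -- well-definedness of the action
    (∀ (x : L) (m : M), ∃ m' : M, i m' = brG (σ x) (i m)) ∧
    -- any function realising the assignment `i (act x m) = ⁅σ x, i m⁆` is a Hom-action
    (∀ act : L → M → M, (∀ (x : L) (m : M), i (act x m) = brG (σ x) (i m)) →
      (∀ (x y : L) (m : M), act (brL x y) (αM m) = act (αL x) (act y m) - act (αL y) (act x m)) ∧
      (∀ (x : L) (m m' : M),
        act (αL x) (brM m m') = brM (act x m) (αM m') + brM (αM m) (act x m')) ∧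
      (∀ (x : L) (m : M), αM (act x m) = act (αL x) (αM m))) := by
  have hπi : ∀ m : M, π (i m) = 0 := by
    intro m
    have : i m ∈ LinearMap.ker π := by
      rw [hexact]; exact ⟨m, rfl⟩
    exact this
  constructor
  · intro x m
    have hker : brG (σ x) (i m) ∈ LinearMap.ker π := by
      simp only [LinearMap.mem_ker, hπbr, hπi, map_zero, LinearMap.map_zero]
    rw [hexact] at hker
    obtain ⟨m', hm'⟩ := hker
    exact ⟨m', hm'⟩
  · intro act hact
    refine ⟨?_, ?_, ?_⟩
    · intro x y m
      apply hinj
      have jac := jacG (σ x) (σ y) (i m)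
      rw [map_sub, hact, hact, hact, hact, hact, hiα, hσbr, hσα, hσα]
      have hskew1 : brG (αG (i m)) (brG (σ x) (σ y))
          = - brG (brG (σ x) (σ y)) (αG (i m)) := skewG _ _
      have hskew2 : brG (αG (σ y)) (brG (i m) (σ x))
          = - brG (αG (σ y)) (brG (σ x) (i m)) := by
        rw [skewG (i m) (σ x), map_neg]
      rw [hskew1, hskew2] at jac
      rw [eq_sub_iff_add_eq]
      linear_combination (norm := abel) -jac
    · intro x m m'
      apply hinj
      have jac := jacG (σ x) (i m) (i m')
      rw [map_add, hact, hibr, hibr, hibr, hact, hact, hiα, hiα, hσα]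
      have hskew1 : brG (αG (i m')) (brG (σ x) (i m))
          = - brG (brG (σ x) (i m)) (αG (i m')) := skewG _ _
      have hskew2 : brG (αG (i m)) (brG (i m') (σ x))
          = - brG (αG (i m)) (brG (σ x) (i m')) := by
        rw [skewG (i m') (σ x), map_neg]
      rw [hskew1, hskew2] at jac
      linear_combination (norm := abel) jac
    · intro x m
      apply hinj
      rw [hiα, hact, hact, hiα, hσα, multG]
end

section
/- For a multiplicative Hom-Lie algebra (L, α_L), the complex d_n: Λⁿ L → Λⁿ⁻¹ L given by d_n(x₁∧⋯∧x_n) = Σ_{i<j} [x_i, x_j] ∧ α_L(x₁) ∧ ⋯ ∧ α̂_L(x_i) ∧ ⋯ ∧ α̂_L(x_j) ∧ ⋯ ∧ α_L(x_n) satisfies d_{n-1} ∘ d_n = 0; in particular d₂ ∘ d₃ = 0 on Λ³L. -/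
/-- The Hom-Jacobi identity, moved by skew-symmetry into the shape that `d₂ ∘ d₃` produces on
`x ∧ y ∧ z`. -/
theorem hom_jacobi_right {R L : Type*} [CommRing R] [AddCommGroup L] [Module R L]
    {br : L →ₗ[R] L →ₗ[R] L} {α : L →ₗ[R] L}
    (skew : ∀ x y : L, br x y = -br y x)
    (jac : ∀ x y z : L, br (α x) (br y z) + br (α z) (br x y) + br (α y) (br z x) = 0)
    (x y z : L) :
    br (br x y) (α z) - br (br x z) (α y) + br (br y z) (α x) = 0 := by
  rw [skew (br x y), skew (br y z), skew x z, map_neg, LinearMap.neg_apply, skew (br z x)]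
  linear_combination (norm := abel) -jac x y z

theorem stmt11_general (K L : Type*) [Field K] [AddCommGroup L] [Module K L]
    (br : L →ₗ[K] L →ₗ[K] L) (α : L →ₗ[K] L)
    (skew : ∀ x y : L, br x y = -br y x)
    (jac : ∀ x y z : L, br (α x) (br y z) + br (α z) (br x y) + br (α y) (br z x) = 0)
    (d2 : ⋀[K]^2 L →ₗ[K] L) (d3 : ⋀[K]^3 L →ₗ[K] ⋀[K]^2 L)
    (hd2 : ∀ x y : L,
      d2 ⟨ExteriorAlgebra.ιMulti K 2 ![x, y],
        ExteriorAlgebra.ιMulti_range K 2 (Set.mem_range_self _)⟩ = br x y)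
    (hd3 : ∀ x y z : L,
      d3 ⟨ExteriorAlgebra.ιMulti K 3 ![x, y, z],
          ExteriorAlgebra.ιMulti_range K 3 (Set.mem_range_self _)⟩
        = ⟨ExteriorAlgebra.ιMulti K 2 ![br x y, α z],
            ExteriorAlgebra.ιMulti_range K 2 (Set.mem_range_self _)⟩
          - ⟨ExteriorAlgebra.ιMulti K 2 ![br x z, α y],
              ExteriorAlgebra.ιMulti_range K 2 (Set.mem_range_self _)⟩
          + ⟨ExteriorAlgebra.ιMulti K 2 ![br y z, α x],
              ExteriorAlgebra.ιMulti_range K 2 (Set.mem_range_self _)⟩) :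
    d2 ∘ₗ d3 = 0 := by
  ext m
  obtain ⟨x, y, z, rfl⟩ : ∃ x y z, m = ![x, y, z] :=
    ⟨m 0, m 1, m 2, by ext i; fin_cases i <;> rfl⟩
  change d2 (d3 ⟨ExteriorAlgebra.ιMulti K 3 ![x, y, z], _⟩) = 0
  rw [hd3, map_add, map_sub, hd2, hd2, hd2]
  exact hom_jacobi_right skew jac x y z

/-- For a multiplicative Hom-Lie algebra `(L, α)`, the differentials of the
Chevalley–Eilenberg-type Hom-complex satisfy `d_{n-1} ∘ d_n = 0`; in particular, for any
linear maps `d₂ : Λ²L → L` and `d₃ : Λ³L → Λ²L` realising the defining formulas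
`d₂(x∧y) = ⁅x,y⁆` and `d₃(x∧y∧z) = ⁅x,y⁆∧α(z) − ⁅x,z⁆∧α(y) + ⁅y,z⁆∧α(x)`, we have
`d₂ ∘ d₃ = 0` on `Λ³L`. -/
theorem stmt11 (K L : Type*) [Field K] [AddCommGroup L] [Module K L]
    (br : L →ₗ[K] L →ₗ[K] L) (α : L →ₗ[K] L)
    (skew : ∀ x y : L, br x y = -br y x) (alt : ∀ x : L, br x x = 0)
    (jac : ∀ x y z : L, br (α x) (br y z) + br (α z) (br x y) + br (α y) (br z x) = 0)
    (mult : ∀ x y : L, α (br x y) = br (α x) (α y))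
    (d2 : ⋀[K]^2 L →ₗ[K] L) (d3 : ⋀[K]^3 L →ₗ[K] ⋀[K]^2 L)
    (hd2 : ∀ x y : L,
      d2 ⟨ExteriorAlgebra.ιMulti K 2 ![x, y],
        ExteriorAlgebra.ιMulti_range K 2 (Set.mem_range_self _)⟩ = br x y)
    (hd3 : ∀ x y z : L,
      d3 ⟨ExteriorAlgebra.ιMulti K 3 ![x, y, z],
          ExteriorAlgebra.ιMulti_range K 3 (Set.mem_range_self _)⟩
        = ⟨ExteriorAlgebra.ιMulti K 2 ![br x y, α z],
            ExteriorAlgebra.ιMulti_range K 2 (Set.mem_range_self _)⟩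
          - ⟨ExteriorAlgebra.ιMulti K 2 ![br x z, α y],
              ExteriorAlgebra.ιMulti_range K 2 (Set.mem_range_self _)⟩
          + ⟨ExteriorAlgebra.ιMulti K 2 ![br y z, α x],
              ExteriorAlgebra.ιMulti_range K 2 (Set.mem_range_self _)⟩) :
    d2 ∘ₗ d3 = 0 :=
  stmt11_general K L br α skew jac d2 d3 hd2 hd3
end

section
/- The tensor centre Z*_α(L) = {l ∈ L | α^k(l) ⋆ x = 0 for all x ∈ L, k ∈ ℕ} of a multiplicative Hom-Lie algebra (L, α_L) is an ideal of (L, α_L) contained in the centre Z(L). -/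
/-- The tensor centre `Z⋆(L) = {l | α^k(l) ⋆ x = 0 for all x, k}` of a
multiplicative Hom-Lie algebra `(L, α)` is an ideal of `(L, α)` contained in the centre
`Z(L)`. Here `(T, αT)` is the non-abelian tensor square `L ⋆ L` of `L` acting on itself by
the bracket, `star` is the canonical bilinear map `(m, n) ↦ m ⋆ n` (whose image spans `T`)
and `θ : L ⋆ L → L` is the canonical homomorphism with `θ(m ⋆ n) = ⁅m, n⁆`. -/
theorem stmt13 (K L T : Type*) [Field K] [AddCommGroup L] [Module K L]
    [AddCommGroup T] [Module K T]
    (br : L →ₗ[K] L →ₗ[K] L) (α : L →ₗ[K] L)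
    (skew : ∀ x y : L, br x y = -br y x) (alt : ∀ x : L, br x x = 0)
    (jac : ∀ x y z : L, br (α x) (br y z) + br (α z) (br x y) + br (α y) (br z x) = 0)
    (mult : ∀ x y : L, α (br x y) = br (α x) (α y))
    -- the non-abelian tensor square `T = L ⋆ L`
    (brT : T →ₗ[K] T →ₗ[K] T) (αT : T →ₗ[K] T)
    (star : L →ₗ[K] L →ₗ[K] T)
    (hspan : Submodule.span K {t : T | ∃ m n : L, star m n = t} = ⊤)
    (hαT : ∀ m n : L, αT (star m n) = star (α m) (α n))
    (hbrT : ∀ m n m' n' : L, brT (star m n) (star m' n') = -star (br n m) (br m' n'))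
    -- the canonical homomorphism `θ : L ⋆ L → L`
    (θ : T →ₗ[K] L) (hθ : ∀ m n : L, θ (star m n) = br m n) :
    letI Zstar : Set L := {l : L | ∀ (k : ℕ) (x : L), star ((α ^ k) l) x = 0}
    -- `Z⋆(L)` is an ideal of `(L, α)` ...
    ((0 : L) ∈ Zstar ∧
     (∀ l l' : L, l ∈ Zstar → l' ∈ Zstar → l + l' ∈ Zstar) ∧
     (∀ (c : K) (l : L), l ∈ Zstar → c • l ∈ Zstar) ∧
     (∀ l : L, l ∈ Zstar → α l ∈ Zstar) ∧
     (∀ l : L, l ∈ Zstar → ∀ x : L, br l x ∈ Zstar)) ∧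
    -- ... contained in the centre `Z(L)`
    (∀ l : L, l ∈ Zstar → ∀ (k : ℕ) (y : L), br ((α ^ k) l) y = 0) := by
  -- containment in the centre, proved first since it's used for the ideal property
  have hZ : ∀ l : L, (∀ (k : ℕ) (x : L), star ((α ^ k) l) x = 0) → ∀ (k : ℕ) (y : L), br ((α ^ k) l) y = 0 := by
    intro l hl k y
    have := hl k y
    calc br ((α ^ k) l) y = θ (star ((α ^ k) l) y) := (hθ _ _).symm
      _ = 0 := by rw [this, map_zero]
  have hpow : ∀ (k : ℕ) (a b : L), (α ^ k) (br a b) = br ((α ^ k) a) ((α ^ k) b) := by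
    intro k
    induction k with
    | zero => intro a b; simp
    | succ n ih =>
      intro a b
      have h1 : (α ^ (n + 1)) (br a b) = α ((α ^ n) (br a b)) := by
        rw [pow_succ']; rfl
      have h2 : ∀ c : L, (α ^ (n + 1)) c = α ((α ^ n) c) := by
        intro c; rw [pow_succ']; rfl
      rw [h1, ih, mult, h2, h2]
  refine ⟨⟨?_, ?_, ?_, ?_, ?_⟩, hZ⟩
  · intro k x; simp
  · intro l l' hl hl' k x
    rw [map_add, map_add, LinearMap.add_apply, hl k x, hl' k x, add_zero]
  · intro c l hl k x
    rw [map_smul, map_smul, LinearMap.smul_apply, hl k x, smul_zero]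
  · intro l hl k x
    have h : (α ^ k) (α l) = (α ^ (k + 1)) l := by rw [pow_succ]; rfl
    rw [h, hl (k + 1) x]
  · intro l hl x k y
    rw [hpow k l x, hZ l hl k ((α ^ k) x), map_zero, LinearMap.zero_apply]
end

section
/- Let (M, α_M) and (N, α_N) be ideals of a multiplicative Hom-Lie algebra (L, α_L), with the induced crossed module structures via inclusion. Then the exterior square M □ N, the vector subspace of the non-abelian tensor product M ⋆ N spanned by elements m ⋆ n with m = n ∈ M ∩ N, is contained in the centre of (M ⋆ N, α_{M⋆N}). -/
/-- Let `(M, α|)` and `(N, α|)` be ideals of a multiplicative Hom-Lie algebra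
`(L, α)`, with the crossed module structures given by the inclusions, acting on each other
via the bracket. Then the subspace `M □ N` of the non-abelian tensor product
`(T, αT) = (M ⋆ N, α_{M⋆N})`, spanned by the elements `m ⋆ m` with `m ∈ M ∩ N`, is
contained in the centre of `(M ⋆ N, α_{M⋆N})`. -/
theorem stmt14 (K L T : Type*) [Field K] [AddCommGroup L] [Module K L]
    [AddCommGroup T] [Module K T]
    (br : L →ₗ[K] L →ₗ[K] L) (α : L →ₗ[K] L)
    (skew : ∀ x y : L, br x y = -br y x) (alt : ∀ x : L, br x x = 0)
    (jac : ∀ x y z : L, br (α x) (br y z) + br (α z) (br x y) + br (α y) (br z x) = 0)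
    (mult : ∀ x y : L, α (br x y) = br (α x) (α y))
    -- the ideals `M` and `N`
    (M N : Submodule K L)
    (hMα : ∀ h ∈ M, α h ∈ M) (hMbr : ∀ h ∈ M, ∀ y : L, br h y ∈ M)
    (hNα : ∀ h ∈ N, α h ∈ N) (hNbr : ∀ h ∈ N, ∀ y : L, br h y ∈ N)
    -- the non-abelian tensor product `T = M ⋆ N`
    (brT : T →ₗ[K] T →ₗ[K] T) (αT : T →ₗ[K] T)
    (star : L →ₗ[K] L →ₗ[K] T)
    (skewT : ∀ s t : T, brT s t = -brT t s) (altT : ∀ t : T, brT t t = 0)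
    (jacT : ∀ s t u : T, brT (αT s) (brT t u) + brT (αT u) (brT s t) + brT (αT t) (brT u s) = 0)
    (multT : ∀ s t : T, αT (brT s t) = brT (αT s) (αT t))
    (hspan : Submodule.span K {t : T | ∃ m ∈ M, ∃ n ∈ N, star m n = t} = ⊤)
    (hαT : ∀ m ∈ M, ∀ n ∈ N, αT (star m n) = star (α m) (α n))
    (hbrT : ∀ m ∈ M, ∀ n ∈ N, ∀ m' ∈ M, ∀ n' ∈ N,
      brT (star m n) (star m' n') = -star (br n m) (br m' n')) :
    -- `M □ N` is contained in the centre of `(M ⋆ N, α_{M⋆N})`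
    ∀ t ∈ Submodule.span K {t : T | ∃ m : L, m ∈ M ∧ m ∈ N ∧ star m m = t},
      ∀ (k : ℕ) (u : T), brT ((αT ^ k) t) u = 0 := by
  -- brackets with diagonal generators vanish
  have h1 : ∀ m, m ∈ M → m ∈ N → ∀ u : T, brT (star m m) u = 0 := by
    intro m hm hn u
    have hu : u ∈ Submodule.span K {t : T | ∃ m ∈ M, ∃ n ∈ N, star m n = t} := by
      rw [hspan]; trivial
    induction hu using Submodule.span_induction with
    | mem x hx =>
      obtain ⟨m', hm', n', hn', rfl⟩ := hx
      rw [hbrT m hm m hn m' hm' n' hn', alt, map_zero, LinearMap.zero_apply, neg_zero]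
    | zero => simp
    | add x y _ _ hx hy => rw [map_add, hx, hy, add_zero]
    | smul c x _ hx => rw [map_smul, hx, smul_zero]
  -- αT^k preserves diagonal generators
  have h2 : ∀ (k : ℕ) (m : L), m ∈ M → m ∈ N →
      ∃ m', m' ∈ M ∧ m' ∈ N ∧ (αT ^ k) (star m m) = star m' m' := by
    intro k
    induction k with
    | zero => intro m hm hn; exact ⟨m, hm, hn, rfl⟩
    | succ k ih =>
      intro m hm hn
      obtain ⟨m', hm', hn', h⟩ := ih (α m) (hMα m hm) (hNα m hn)
      refine ⟨m', hm', hn', ?_⟩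
      rw [pow_succ, Module.End.mul_apply, hαT m hm m hn, h]
  intro t ht k u
  induction ht using Submodule.span_induction with
  | mem x hx =>
    obtain ⟨m, hm, hn, rfl⟩ := hx
    obtain ⟨m', hm', hn', h⟩ := h2 k m hm hn
    rw [h]; exact h1 m' hm' hn' u
  | zero => simp
  | add x y _ _ hx hy => rw [map_add, map_add, LinearMap.add_apply, hx, hy, add_zero]
  | smul c x _ hx => rw [map_smul, map_smul, LinearMap.smul_apply, hx, smul_zero]
end

section
/- If a multiplicative Hom-Lie algebra (L, α_L) is perfect (L = [L, L]), then the exterior square L ∧̄ L coincides with the tensor square L ⋆ L, i.e., the subspace L □ L spanned by elements m ⋆ m is zero in L ⋆ L. -/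
/-- If a multiplicative Hom-Lie algebra `(L, α)` is perfect (`L = [L,L]`), then
the exterior square `L ∧̄ L` coincides with the tensor square `L ⋆ L`: the subspace
`L □ L`, spanned by the elements `m ⋆ m`, is zero in `L ⋆ L`. Here `(T, αT) = L ⋆ L` with
canonical bilinear map `star` subject to the five defining families of relations of the
non-abelian tensor product for the self-action `ᵐn = ⁅m, n⁆`. -/
theorem stmt16 (K L T : Type*) [Field K] [AddCommGroup L] [Module K L]
    [AddCommGroup T] [Module K T]
    (br : L →ₗ[K] L →ₗ[K] L) (α : L →ₗ[K] L)
    (skew : ∀ x y : L, br x y = -br y x) (alt : ∀ x : L, br x x = 0)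
    (jac : ∀ x y z : L, br (α x) (br y z) + br (α z) (br x y) + br (α y) (br z x) = 0)
    (mult : ∀ x y : L, α (br x y) = br (α x) (α y))
    -- the tensor square `T = L ⋆ L`
    (brT : T →ₗ[K] T →ₗ[K] T) (αT : T →ₗ[K] T)
    (star : L →ₗ[K] L →ₗ[K] T)
    (hspan : Submodule.span K {t : T | ∃ m n : L, star m n = t} = ⊤)
    (hαT : ∀ m n : L, αT (star m n) = star (α m) (α n))
    (hbrT : ∀ m n m' n' : L, brT (star m n) (star m' n') = -star (br n m) (br m' n'))
    -- the defining relations (a)–(e) of the non-abelian tensor product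
    (ha : ∀ m m' n : L,
      star (br m m') (α n) = star (α m) (br m' n) - star (α m') (br m n))
    (hb : ∀ m n n' : L,
      star (α m) (br n n') = star (br n' m) (α n) - star (br n m) (α n'))
    (hc : ∀ m n : L, star (br n m) (br m n) = 0)
    (hd : ∀ m n m' n' : L, star (br n m) (br m' n') + star (br n' m') (br m n) = 0)
    (he : ∀ m n m' n' m'' n'' : L,
      star (br (br n m) (br n' m')) (α (br m'' n''))
        + star (br (br n' m') (br n'' m'')) (α (br m n))
        + star (br (br n'' m'') (br n m)) (α (br m' n')) = 0)
    -- `(L, α)` is perfect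
    (hperf : Submodule.span K {z : L | ∃ x y : L, br x y = z} = ⊤) :
    -- `L □ L = 0`, so `L ∧̄ L = L ⋆ L`
    Submodule.span K {t : T | ∃ m : L, star m m = t} = ⊥ := by
  -- symmetry: star x y + star y x = 0 for brackets, then for all x, y by perfectness
  have hmem : ∀ x : L, x ∈ Submodule.span K {z : L | ∃ a b : L, br a b = z} := by
    intro x; rw [hperf]; trivial
  have key : ∀ a b c d : L, star (br a b) (br c d) + star (br c d) (br a b) = 0 := by
    intro a b c d
    have h := hd b a c d
    have h1 : star (br d c) (br b a) = star (br c d) (br a b) := by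
      rw [skew d c, skew b a]; simp
    rw [h1] at h
    exact h
  have hB : ∀ x y : L, star x y + star y x = 0 := by
    have hgen : ∀ a b : L, ∀ y : L, star (br a b) y + star y (br a b) = 0 := by
      intro a b y
      refine Submodule.span_induction (p := fun y _ => star (br a b) y + star y (br a b) = 0)
        ?_ ?_ ?_ ?_ (hmem y)
      · rintro _ ⟨c, d, rfl⟩; exact key a b c d
      · simp
      · intro u v _ _ hu hv
        have : star (br a b) (u + v) + star (u + v) (br a b)
            = (star (br a b) u + star u (br a b)) + (star (br a b) v + star v (br a b)) := by
          simp [map_add]; abel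
        rw [this, hu, hv, add_zero]
      · intro c u _ hu
        have : star (br a b) (c • u) + star (c • u) (br a b)
            = c • (star (br a b) u + star u (br a b)) := by
          simp [map_smul, smul_add]
        rw [this, hu, smul_zero]
    intro x y
    refine Submodule.span_induction (p := fun x _ => star x y + star y x = 0)
      ?_ ?_ ?_ ?_ (hmem x)
    · rintro _ ⟨a, b, rfl⟩; exact hgen a b y
    · simp
    · intro u v _ _ hu hv
      have : star (u + v) y + star y (u + v)
          = (star u y + star y u) + (star v y + star y v) := by
        simp [map_add]; abel
      rw [this, hu, hv, add_zero]
    · intro c u _ hu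
      have : star (c • u) y + star y (c • u) = c • (star u y + star y u) := by
        simp [map_smul, smul_add]
      rw [this, hu, smul_zero]
  -- q(m) = star m m vanishes
  have hq : ∀ m : L, star m m = 0 := by
    intro m
    refine Submodule.span_induction (p := fun m _ => star m m = 0)
      ?_ ?_ ?_ ?_ (hmem m)
    · rintro _ ⟨a, b, rfl⟩
      have h := hc b a
      rwa [skew b a, map_neg, neg_eq_zero] at h
    · simp
    · intro u v _ _ hu hv
      have : star (u + v) (u + v)
          = star u u + star v v + (star u v + star v u) := by
        simp [map_add]; abel
      rw [this, hu, hv, hB u v]; simp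
    · intro c u _ hu
      have : star (c • u) (c • u) = (c * c) • star u u := by
        simp [map_smul, smul_smul]
      rw [this, hu, smul_zero]
  -- conclude
  rw [eq_bot_iff]
  rw [Submodule.span_le]
  rintro _ ⟨m, rfl⟩
  simp [hq m]
end

section
/- Let 0 → (N, α_N) → (G, α_G) → (L, α_L) → 0 be a central extension of multiplicative Hom-Lie algebras (i.e., [N, G] = 0). Then the induced extension 0 → N ∩ [G,G] → [G,G] → [L,L] → 0 is also central, and if moreover (L, α_L) is perfect, then [G,G] is a perfect Hom-Lie algebra. -/
/-- Let `0 → (N, αN) →ι (G, αG) →π (L, αL) → 0` be a central extension of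
multiplicative Hom-Lie algebras (`⁅ι n, g⁆ = 0` for all `n, g`). Then the induced extension
`0 → N ∩ [G,G] → [G,G] → [L,L] → 0` is also central (its kernel `range ι ⊓ [G,G]` brackets
trivially with `[G,G]`, `π` maps `[G,G]` onto `[L,L]` with kernel `range ι ⊓ [G,G]`), and if
moreover `(L, αL)` is perfect then `[G,G]` is a perfect Hom-Lie algebra. -/
theorem stmt17 (K N G L : Type*) [Field K]
    [AddCommGroup N] [Module K N] [AddCommGroup G] [Module K G]
    [AddCommGroup L] [Module K L]
    (brN : N →ₗ[K] N →ₗ[K] N) (αN : N →ₗ[K] N)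
    (brG : G →ₗ[K] G →ₗ[K] G) (αG : G →ₗ[K] G)
    (brL : L →ₗ[K] L →ₗ[K] L) (αL : L →ₗ[K] L)
    (skewG : ∀ x y : G, brG x y = -brG y x) (altG : ∀ x : G, brG x x = 0)
    (jacG : ∀ x y z : G, brG (αG x) (brG y z) + brG (αG z) (brG x y) + brG (αG y) (brG z x) = 0)
    (multG : ∀ x y : G, αG (brG x y) = brG (αG x) (αG y))
    (skewL : ∀ x y : L, brL x y = -brL y x) (altL : ∀ x : L, brL x x = 0)
    (jacL : ∀ x y z : L, brL (αL x) (brL y z) + brL (αL z) (brL x y) + brL (αL y) (brL z x) = 0)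
    (multL : ∀ x y : L, αL (brL x y) = brL (αL x) (αL y))
    (ι : N →ₗ[K] G) (π : G →ₗ[K] L)
    (hιbr : ∀ m m' : N, ι (brN m m') = brG (ι m) (ι m')) (hια : ∀ m : N, ι (αN m) = αG (ι m))
    (hπbr : ∀ g g' : G, π (brG g g') = brL (π g) (π g')) (hπα : ∀ g : G, π (αG g) = αL (π g))
    (hinj : Function.Injective ι) (hsurj : Function.Surjective π)
    (hexact : LinearMap.ker π = LinearMap.range ι)
    -- centrality: `[N, G] = 0`
    (hcentral : ∀ (n : N) (g : G), brG (ι n) g = 0) :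
    letI DG : Submodule K G := Submodule.span K {z : G | ∃ a b : G, brG a b = z}
    letI DL : Submodule K L := Submodule.span K {z : L | ∃ a b : L, brL a b = z}
    -- the induced extension `0 → N ∩ [G,G] → [G,G] → [L,L] → 0` is exact ...
    (Submodule.map π DG = DL) ∧
    (∀ x ∈ DG, π x = 0 ↔ x ∈ LinearMap.range ι ⊓ DG) ∧
    -- ... and central
    (∀ x ∈ LinearMap.range ι ⊓ DG, ∀ g ∈ DG, brG x g = 0) ∧
    -- if `L` is perfect, then `[G,G]` is perfect
    (DL = ⊤ → Submodule.span K {z : G | ∃ a ∈ DG, ∃ b ∈ DG, brG a b = z} = DG) := by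

  set DG : Submodule K G := Submodule.span K {z : G | ∃ a b : G, brG a b = z} with hDG
  set DL : Submodule K L := Submodule.span K {z : L | ∃ a b : L, brL a b = z} with hDL
  have hmap : Submodule.map π DG = DL := by
    rw [Submodule.map_span]
    apply le_antisymm
    · apply Submodule.span_mono
      rintro _ ⟨z, ⟨a, b, rfl⟩, rfl⟩
      exact ⟨π a, π b, (hπbr a b).symm⟩
    · apply Submodule.span_mono
      rintro z ⟨a, b, rfl⟩
      obtain ⟨a', rfl⟩ := hsurj a
      obtain ⟨b', rfl⟩ := hsurj b
      exact ⟨brG a' b', ⟨a', b', rfl⟩, hπbr a' b'⟩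
  refine ⟨hmap, ?_, ?_, ?_⟩
  · intro x hx
    constructor
    · intro h
      exact ⟨hexact ▸ LinearMap.mem_ker.mpr h, hx⟩
    · rintro ⟨hr, _⟩
      exact LinearMap.mem_ker.mp (hexact ▸ hr)
  · rintro x ⟨⟨n, rfl⟩, _⟩ g _
    exact hcentral n g
  · intro hperf
    have hdec : ∀ g : G, ∃ d ∈ DG, ∃ n : N, g = d + ι n := by
      intro g
      have : π g ∈ Submodule.map π DG := by rw [hmap, hperf]; trivial
      obtain ⟨d, hd, hdg⟩ := this
      have : g - d ∈ LinearMap.ker π := by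
        simp [LinearMap.mem_ker, map_sub, hdg]
      rw [hexact] at this
      obtain ⟨n, hn⟩ := this
      exact ⟨d, hd, n, by rw [hn]; abel⟩
    apply le_antisymm
    · rw [Submodule.span_le]
      rintro z ⟨a, ha, b, hb, rfl⟩
      exact Submodule.subset_span ⟨a, b, rfl⟩
    · rw [Submodule.span_le]
      rintro z ⟨a, b, rfl⟩
      obtain ⟨d, hd, n, rfl⟩ := hdec a
      obtain ⟨e, he, m, rfl⟩ := hdec b
      have h1 : brG (ι n) (e + ι m) = 0 := hcentral n _
      have h2 : brG d (ι m) = 0 := by rw [skewG, hcentral m d, neg_zero]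
      have : brG (d + ι n) (e + ι m) = brG d e := by
        simp [map_add, hcentral n, h2]
      rw [this]
      exact Submodule.subset_span ⟨d, hd, e, he, rfl⟩
end

section
/- Let (L, α_L) be a multiplicative Hom-Lie algebra. The space Der(L) = ⊕_{k≥0} Der_{α^k}(L) with bracket [d, d'] = d∘d' − d'∘d (where [d, d'] ∈ Der_{α^{k+h}}(L) for d ∈ Der_{α^k}(L), d' ∈ Der_{α^h}(L)) and twist α̃(d) = α_L ∘ d is a Hom-Lie algebra. -/
private lemma stmt19.key {R : Type*} [Ring R] (α a X : R) (h : X * α = α * X) :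
    (α * a) * X - X * (α * a) = α * (a * X - X * a) := by
  rw [mul_sub, mul_assoc, ← mul_assoc X α a, h, mul_assoc]

/-- For a multiplicative Hom-Lie algebra `(L, α)`, the space
`Der(L) = ⊕_{k ≥ 0} Der_{α^k}(L)` of `α^k`-derivations (realised inside `End(L)` as the span
of the homogeneous derivations), with bracket `⁅d, d'⁆ = d ∘ d' − d' ∘ d` and twist
`α̃ d = α ∘ d`, is a Hom-Lie algebra: the commutator of an `α^k`-derivation and an
`α^h`-derivation is an `α^(k+h)`-derivation (so `Der(L)` is closed under the bracket),
`α̃` maps `α^k`-derivations to `α^(k+1)`-derivations (so `Der(L)` is `α̃`-invariant and `α̃`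
is multiplicative automatically for the commutator bracket), and the Hom-Jacobi identity
`⁅α̃ d, ⁅d', d''⁆⁆ + ⁅α̃ d'', ⁅d, d'⁆⁆ + ⁅α̃ d', ⁅d'', d⁆⁆ = 0` holds on `Der(L)`. -/
theorem stmt19 (K L : Type*) [Field K] [AddCommGroup L] [Module K L]
    (br : L →ₗ[K] L →ₗ[K] L) (α : L →ₗ[K] L)
    (skew : ∀ x y : L, br x y = -br y x) (alt : ∀ x : L, br x x = 0)
    (jac : ∀ x y z : L, br (α x) (br y z) + br (α z) (br x y) + br (α y) (br z x) = 0)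
    (mult : ∀ x y : L, α (br x y) = br (α x) (α y)) :
    letI IsDer : ℕ → (L →ₗ[K] L) → Prop := fun k d =>
      (∀ y : L, d (α y) = α (d y)) ∧
      (∀ x y : L, d (br x y) = br (d x) ((α ^ k) y) + br ((α ^ k) x) (d y))
    letI Der : Submodule K (L →ₗ[K] L) := Submodule.span K {d | ∃ k, IsDer k d}
    -- homogeneous closure under the commutator bracket
    (∀ (k h : ℕ) (d d' : L →ₗ[K] L), IsDer k d → IsDer h d' →
      IsDer (k + h) (d ∘ₗ d' - d' ∘ₗ d)) ∧
    -- `Der(L)` is closed under the commutator bracket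
    (∀ d ∈ Der, ∀ d' ∈ Der, d ∘ₗ d' - d' ∘ₗ d ∈ Der) ∧
    -- the twist `α̃ d = α ∘ d` maps `α^k`-derivations to `α^(k+1)`-derivations
    (∀ (k : ℕ) (d : L →ₗ[K] L), IsDer k d → IsDer (k + 1) (α ∘ₗ d)) ∧
    -- `Der(L)` is invariant under the twist
    (∀ d ∈ Der, α ∘ₗ d ∈ Der) ∧
    -- Hom-Jacobi identity on `Der(L)`
    (∀ d ∈ Der, ∀ d' ∈ Der, ∀ d'' ∈ Der,
      ((α ∘ₗ d) ∘ₗ (d' ∘ₗ d'' - d'' ∘ₗ d') - (d' ∘ₗ d'' - d'' ∘ₗ d') ∘ₗ (α ∘ₗ d)) +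
      ((α ∘ₗ d'') ∘ₗ (d ∘ₗ d' - d' ∘ₗ d) - (d ∘ₗ d' - d' ∘ₗ d) ∘ₗ (α ∘ₗ d'')) +
      ((α ∘ₗ d') ∘ₗ (d'' ∘ₗ d - d ∘ₗ d'') - (d'' ∘ₗ d - d ∘ₗ d'') ∘ₗ (α ∘ₗ d')) = 0) := by
  -- commutation with powers of α, pointwise
  have hpow : ∀ (d : L →ₗ[K] L), (∀ y, d (α y) = α (d y)) →
      ∀ (n : ℕ) (y : L), d ((α ^ n) y) = (α ^ n) (d y) := by
    intro d hd n
    induction n with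
    | zero => intro y; simp
    | succ n ih =>
      intro y
      rw [pow_succ, Module.End.mul_apply, Module.End.mul_apply, ih, hd]
  have hap : ∀ (n : ℕ) (y : L), α ((α ^ n) y) = (α ^ n) (α y) := fun n y => by
    rw [← Module.End.mul_apply, ← Module.End.mul_apply, ← pow_succ', ← pow_succ]
  -- (1) homogeneous closure
  have h1 : ∀ (k h : ℕ) (d d' : L →ₗ[K] L),
      ((∀ y : L, d (α y) = α (d y)) ∧
        (∀ x y : L, d (br x y) = br (d x) ((α ^ k) y) + br ((α ^ k) x) (d y))) →
      ((∀ y : L, d' (α y) = α (d' y)) ∧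
        (∀ x y : L, d' (br x y) = br (d' x) ((α ^ h) y) + br ((α ^ h) x) (d' y))) →
      ((∀ y : L, (d ∘ₗ d' - d' ∘ₗ d) (α y) = α ((d ∘ₗ d' - d' ∘ₗ d) y)) ∧
        (∀ x y : L, (d ∘ₗ d' - d' ∘ₗ d) (br x y) =
          br ((d ∘ₗ d' - d' ∘ₗ d) x) ((α ^ (k + h)) y) +
          br ((α ^ (k + h)) x) ((d ∘ₗ d' - d' ∘ₗ d) y))) := by
    intro k h d d' ⟨hdc, hdl⟩ ⟨hdc', hdl'⟩
    constructor
    · intro y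
      simp only [LinearMap.sub_apply, LinearMap.comp_apply, hdc, hdc',
        map_sub]
    · intro x y
      have e1 : d (d' (br x y)) =
          br (d (d' x)) ((α ^ k) ((α ^ h) y)) + br ((α ^ k) (d' x)) ((α ^ h) (d y))
          + (br ((α ^ h) (d x)) ((α ^ k) (d' y)) + br ((α ^ k) ((α ^ h) x)) (d (d' y))) := by
        rw [hdl', map_add, hdl, hdl, hpow d hdc h, hpow d hdc h]
      have e2 : d' (d (br x y)) =
          br (d' (d x)) ((α ^ h) ((α ^ k) y)) + br ((α ^ h) (d x)) ((α ^ k) (d' y))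
          + (br ((α ^ k) (d' x)) ((α ^ h) (d y)) + br ((α ^ h) ((α ^ k) x)) (d' (d y))) := by
        rw [hdl, map_add, hdl', hdl', hpow d' hdc' k, hpow d' hdc' k]
      have hcomm : ∀ z : L, (α ^ k) ((α ^ h) z) = (α ^ (k + h)) z := by
        intro z; rw [pow_add]; rfl
      have hcomm' : ∀ z : L, (α ^ h) ((α ^ k) z) = (α ^ (k + h)) z := by
        intro z; rw [add_comm, pow_add]; rfl
      simp only [LinearMap.sub_apply, LinearMap.comp_apply, e1, e2, hcomm, hcomm']
      simp only [map_sub, LinearMap.sub_apply]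
      abel
  refine ⟨h1, ?_, ?_, ?_, ?_⟩
  -- (2) closure of the span under the bracket
  · intro d hd d' hd'
    induction hd, hd' using Submodule.span_induction₂ with
    | mem_mem x y hx hy =>
      obtain ⟨k, hk⟩ := hx
      obtain ⟨h, hh⟩ := hy
      exact Submodule.subset_span ⟨k + h, h1 k h x y hk hh⟩
    | zero_left y hy => simpa using Submodule.zero_mem _
    | zero_right x hx => simpa using Submodule.zero_mem _
    | add_left x y z hx hy hz h₁ h₂ =>
      have : (x + y) ∘ₗ z - z ∘ₗ (x + y) = (x ∘ₗ z - z ∘ₗ x) + (y ∘ₗ z - z ∘ₗ y) := by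
        rw [LinearMap.add_comp, LinearMap.comp_add]; abel
      rw [this]; exact Submodule.add_mem _ h₁ h₂
    | add_right x y z hx hy hz h₁ h₂ =>
      have : x ∘ₗ (y + z) - (y + z) ∘ₗ x = (x ∘ₗ y - y ∘ₗ x) + (x ∘ₗ z - z ∘ₗ x) := by
        rw [LinearMap.add_comp, LinearMap.comp_add]; abel
      rw [this]; exact Submodule.add_mem _ h₁ h₂
    | smul_left r x y hx hy h₁ =>
      have : (r • x) ∘ₗ y - y ∘ₗ (r • x) = r • (x ∘ₗ y - y ∘ₗ x) := by
        rw [LinearMap.smul_comp, LinearMap.comp_smul, smul_sub]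
      rw [this]; exact Submodule.smul_mem _ r h₁
    | smul_right r x y hx hy h₁ =>
      have : x ∘ₗ (r • y) - (r • y) ∘ₗ x = r • (x ∘ₗ y - y ∘ₗ x) := by
        rw [LinearMap.smul_comp, LinearMap.comp_smul, smul_sub]
      rw [this]; exact Submodule.smul_mem _ r h₁
  -- (3) twist on homogeneous derivations
  · intro k d ⟨hdc, hdl⟩
    constructor
    · intro y
      simp only [LinearMap.comp_apply, hdc]
    · intro x y
      simp only [LinearMap.comp_apply, hdl, map_add, mult, pow_succ,
        Module.End.mul_apply, hdc, hap]
  -- (4) twist invariance of the span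
  · intro d hd
    induction hd using Submodule.span_induction with
    | mem x hx =>
      obtain ⟨k, hk⟩ := hx
      refine Submodule.subset_span ⟨k + 1, ?_⟩
      constructor
      · intro y; simp only [LinearMap.comp_apply, hk.1]
      · intro x' y
        simp only [LinearMap.comp_apply, hk.2, map_add, mult, pow_succ,
          Module.End.mul_apply, hk.1, hap]
    | zero => simpa using Submodule.zero_mem _
    | add x y hx hy h₁ h₂ =>
      rw [LinearMap.comp_add]; exact Submodule.add_mem _ h₁ h₂
    | smul r x hx h₁ =>
      rw [LinearMap.comp_smul]; exact Submodule.smul_mem _ r h₁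
  -- (5) Hom-Jacobi identity
  · -- every element of Der commutes with α
    have hcomm : ∀ d : L →ₗ[K] L, d ∈ Submodule.span K {d : L →ₗ[K] L | ∃ k,
        (∀ y : L, d (α y) = α (d y)) ∧
        (∀ x y : L, d (br x y) = br (d x) ((α ^ k) y) + br ((α ^ k) x) (d y))} →
        d * α = α * d := by
      intro d hd
      induction hd using Submodule.span_induction with
      | mem x hx =>
        obtain ⟨k, hk⟩ := hx
        exact LinearMap.ext fun y => hk.1 y
      | zero => simp
      | add x y hx hy h₁ h₂ => rw [add_mul, mul_add, h₁, h₂]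
      | smul r x hx h₁ => rw [smul_mul_assoc, mul_smul_comm, h₁]
    intro d hd d' hd' d'' hd''
    have c1 : Commute α d := (hcomm d hd).symm
    have c2 : Commute α d' := (hcomm d' hd').symm
    have c3 : Commute α d'' := (hcomm d'' hd'').symm
    have hX1 : (d' * d'' - d'' * d') * α = α * (d' * d'' - d'' * d') :=
      ((c2.mul_right c3).sub_right (c3.mul_right c2)).symm
    have hX2 : (d * d' - d' * d) * α = α * (d * d' - d' * d) :=
      ((c1.mul_right c2).sub_right (c2.mul_right c1)).symm
    have hX3 : (d'' * d - d * d'') * α = α * (d'' * d - d * d'') :=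
      ((c3.mul_right c1).sub_right (c1.mul_right c3)).symm
    show ((α * d) * (d' * d'' - d'' * d') - (d' * d'' - d'' * d') * (α * d)) +
      ((α * d'') * (d * d' - d' * d) - (d * d' - d' * d) * (α * d'')) +
      ((α * d') * (d'' * d - d * d'') - (d'' * d - d * d'') * (α * d')) = 0
    rw [stmt19.key α d _ hX1, stmt19.key α d'' _ hX2, stmt19.key α d' _ hX3,
      ← mul_add, ← mul_add]
    convert mul_zero α using 2
    noncomm_ring
end
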